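/- arXiv:1411.5082 — 3 statements merged into one kernel-verified Lean document; each statement's English description precedes it below -/
import Mathlib

section
/- Let n ≥ 1, N = 2^n, 0 ≤ m < n, 1 ≤ i ≤ N, and 1 ≤ j ≤ 2^m, and let y ∈ ℝ^N and u ∈ (ZMod 2)^{i−1}. Write A = L_{N/2^{m+1}}^{(⌈i/2^{m+1}⌉)}(y_seg_{2j−1, m+1}, h_{2j−1, m+1}(u)) and B = L_{N/2^{m+1}}^{(⌈i/2^{m+1}⌉)}(y_seg_{2j, m+1}, h_{2j, m+1}(u)). Then L_{N/2^m}^{(⌈i/2^m⌉)}(y_seg_{j,m}, h_{j,m}(u)) = f(A, B) if ⌈i/2^m⌉ is odd, and L_{N/2^m}^{(⌈i/2^m⌉)}(y_seg_{j,m}, h_{j,m}(u)) = g(A, B, r) if ⌈i/2^m⌉ is even, where r is the last component of h_{j,m}(u). (Here h_{j,0} is the identity map, so the case m = 0, j = 1 is the defining recursion.) -/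
/-- `pmap u` : componentwise XOR of odd-indexed and even-indexed subvectors
(1-based: component `a` is `u_{2a-1} + u_{2a}`); length `⌊l/2⌋`. -/
def pmap (u : List (ZMod 2)) : List (ZMod 2) :=
  List.ofFn fun t : Fin (u.length / 2) => u.getD (2 * (t : ℕ)) 0 + u.getD (2 * (t : ℕ) + 1) 0

/-- `qmap u` : the even-indexed subvector (1-based: component `a` is `u_{2a}`). -/
def qmap (u : List (ZMod 2)) : List (ZMod 2) :=
  List.ofFn fun t : Fin (u.length / 2) => u.getD (2 * (t : ℕ) + 1) 0

/-- `hmap j k = θ_k ∘ ⋯ ∘ θ_1`, where `θ_a = p` if `b_{k-a+1} = 0` and `θ_a = q`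
if `b_{k-a+1} = 1`, with `b_k ⋯ b_1` the `k`-bit binary expansion of `j - 1`
(`b_1` least significant, i.e. `b_t` is bit `t-1`). -/
def hmap (j k : ℕ) (u : List (ZMod 2)) : List (ZMod 2) :=
  (List.range k).foldl
    (fun v a => if Nat.testBit (j - 1) (k - 1 - a) then qmap v else pmap v) u

/-- The index set `D_{j,k,a}`. -/
def Dset (j k a : ℕ) : Finset ℕ :=
  ((Finset.range (2 ^ k)).filter fun c => (j - 1) &&& c = j - 1).image
    fun c => (a - 1) * 2 ^ k + 1 + c

noncomputable def fLR (a b : ℝ) : ℝ := (a * b + 1) / (a + b)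

noncomputable def gLR (a b : ℝ) (s : ZMod 2) : ℝ := a ^ ((1 : ℤ) - 2 * (s.val : ℤ)) * b

/-- `LR n y i u` is the likelihood ratio `L_{2^n}^{(i)}(y, u)` (with `i` 1-based). -/
noncomputable def LR : ℕ → List ℝ → ℕ → List (ZMod 2) → ℝ
  | 0, y, _, _ => y.getD 0 0
  | n + 1, y, i, u =>
      if i % 2 = 1 then
        fLR (LR n (y.take (2 ^ n)) ((i + 1) / 2) (pmap u))
            (LR n (y.drop (2 ^ n)) ((i + 1) / 2) (qmap u))
      else
        gLR (LR n (y.take (2 ^ n)) ((i + 1) / 2) (pmap u))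
            (LR n (y.drop (2 ^ n)) ((i + 1) / 2) (qmap u))
            (u.getD (i - 2) 0)

/-- `yseg n k j y` : the segment `(y_{(j-1)·N/2^k+1}, …, y_{j·N/2^k})` of `y ∈ ℝ^{2^n}`. -/
def yseg (n k j : ℕ) (y : List ℝ) : List ℝ :=
  (y.drop ((j - 1) * 2 ^ (n - k))).take (2 ^ (n - k))

lemma pmap_length (u : List (ZMod 2)) : (pmap u).length = u.length / 2 := by simp [pmap]
lemma qmap_length (u : List (ZMod 2)) : (qmap u).length = u.length / 2 := by simp [qmap]

lemma foldl_pq_length (l : List ℕ) (f : ℕ → Bool) (u : List (ZMod 2)) :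
    ((l.foldl (fun v a => if f a then qmap v else pmap v) u)).length
      = u.length / 2 ^ l.length := by
  induction l generalizing u with
  | nil => simp
  | cons a l ih =>
      simp only [List.foldl_cons, ih, List.length_cons]
      by_cases h : f a <;>
        simp [h, qmap_length, pmap_length, Nat.div_div_eq_div_mul, pow_succ, mul_comm]

lemma hmap_length (j k : ℕ) (u : List (ZMod 2)) :
    (hmap j k u).length = u.length / 2 ^ k := by
  have := foldl_pq_length (List.range k) (fun a => Nat.testBit (j - 1) (k - 1 - a)) u
  simpa [hmap] using this

lemma hmap_odd (j m : ℕ) (hj : 1 ≤ j) (u : List (ZMod 2)) :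
    hmap (2 * j - 1) (m + 1) u = pmap (hmap j m u) := by
  unfold hmap
  rw [List.range_succ, List.foldl_append]
  have h1 : 2 * j - 1 - 1 = 2 * (j - 1) := by omega
  have hbit0 : Nat.testBit (2 * (j - 1)) 0 = false := by
    simp [Nat.testBit_zero, Nat.mul_mod_right]
  have hcong : (List.range m).foldl
      (fun v a => if Nat.testBit (2 * j - 1 - 1) (m + 1 - 1 - a) then qmap v else pmap v) u
      = (List.range m).foldl
      (fun v a => if Nat.testBit (j - 1) (m - 1 - a) then qmap v else pmap v) u := by
    apply List.foldl_ext
    intro v a ha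
    rw [List.mem_range] at ha
    have : m + 1 - 1 - a = (m - 1 - a) + 1 := by omega
    rw [h1, this, Nat.testBit_succ]
    have h3 : 2 * (j - 1) / 2 = j - 1 := by omega
    rw [h3]
  rw [hcong]
  simp [h1, hbit0]

lemma hmap_even (j m : ℕ) (hj : 1 ≤ j) (u : List (ZMod 2)) :
    hmap (2 * j) (m + 1) u = qmap (hmap j m u) := by
  unfold hmap
  rw [List.range_succ, List.foldl_append]
  have h1 : 2 * j - 1 = 2 * (j - 1) + 1 := by omega
  have hbit0 : Nat.testBit (2 * (j - 1) + 1) 0 = true := by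
    have h2 : (2 * (j - 1) + 1) % 2 = 1 := by omega
    simp [Nat.testBit_zero, h2]
  have hcong : (List.range m).foldl
      (fun v a => if Nat.testBit (2 * j - 1) (m + 1 - 1 - a) then qmap v else pmap v) u
      = (List.range m).foldl
      (fun v a => if Nat.testBit (j - 1) (m - 1 - a) then qmap v else pmap v) u := by
    apply List.foldl_ext
    intro v a ha
    rw [List.mem_range] at ha
    have h2 : m + 1 - 1 - a = (m - 1 - a) + 1 := by omega
    rw [h1, h2, Nat.testBit_succ]
    have : (2 * (j - 1) + 1) / 2 = j - 1 := by omega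
    rw [this]
  rw [hcong]
  simp [h1, hbit0]

/-- The recursion for the likelihood ratio
`L_{N/2^m}^{(⌈i/2^m⌉)}(y_seg_{j,m}, h_{j,m}(u))` in terms of the two likelihood ratios at
length `N/2^{m+1}`: it equals `f(A, B)` when `⌈i/2^m⌉` is odd and `g(A, B, r)` when
`⌈i/2^m⌉` is even, where `r` is the last component of `h_{j,m}(u)`. -/
theorem stmt4 (n m i j : ℕ) (hn : 1 ≤ n) (hm : m < n) (hi1 : 1 ≤ i) (hi2 : i ≤ 2 ^ n)
    (hj1 : 1 ≤ j) (hj2 : j ≤ 2 ^ m)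
    (y : List ℝ) (hy : y.length = 2 ^ n)
    (u : List (ZMod 2)) (hu : u.length = i - 1) :
    LR (n - m) (yseg n m j y) ((i + 2 ^ m - 1) / 2 ^ m) (hmap j m u) =
      if ((i + 2 ^ m - 1) / 2 ^ m) % 2 = 1 then
        fLR
          (LR (n - (m + 1)) (yseg n (m + 1) (2 * j - 1) y)
            ((i + 2 ^ (m + 1) - 1) / 2 ^ (m + 1)) (hmap (2 * j - 1) (m + 1) u))
          (LR (n - (m + 1)) (yseg n (m + 1) (2 * j) y)
            ((i + 2 ^ (m + 1) - 1) / 2 ^ (m + 1)) (hmap (2 * j) (m + 1) u))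
      else
        gLR
          (LR (n - (m + 1)) (yseg n (m + 1) (2 * j - 1) y)
            ((i + 2 ^ (m + 1) - 1) / 2 ^ (m + 1)) (hmap (2 * j - 1) (m + 1) u))
          (LR (n - (m + 1)) (yseg n (m + 1) (2 * j) y)
            ((i + 2 ^ (m + 1) - 1) / 2 ^ (m + 1)) (hmap (2 * j) (m + 1) u))
          ((hmap j m u).getD ((hmap j m u).length - 1) 0) := by
  have hk : n - m = (n - (m + 1)) + 1 := by omega
  set k := n - (m + 1) with hkdef
  have e1 : i + 2 ^ m - 1 = (i - 1) + 2 ^ m := by omega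
  have hpos : 0 < (2 : ℕ) ^ m := pow_pos (by norm_num) m
  have hq : (i + 2 ^ m - 1) / 2 ^ m = (i - 1) / 2 ^ m + 1 := by
    rw [e1, Nat.add_div_right _ hpos]
  have hidx : ((i + 2 ^ m - 1) / 2 ^ m + 1) / 2 = (i + 2 ^ (m + 1) - 1) / 2 ^ (m + 1) := by
    have e2 : i + 2 ^ (m + 1) - 1 = (i - 1) + 2 ^ (m + 1) := by omega
    rw [hq, e2, Nat.add_div_right _ (pow_pos (by norm_num) (m + 1))]
    have : (i - 1) / 2 ^ m + 1 + 1 = (i - 1) / 2 ^ m + 2 := by omega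
    rw [this, Nat.add_div_right _ (by norm_num : 0 < 2), Nat.div_div_eq_div_mul, ← pow_succ]
  have htake : (yseg n m j y).take (2 ^ k) = yseg n (m + 1) (2 * j - 1) y := by
    unfold yseg
    rw [hk, List.take_take, pow_succ]
    have h2 : min (2 ^ k) (2 ^ k * 2) = 2 ^ k :=
      min_eq_left (Nat.le_mul_of_pos_right _ (by norm_num))
    rw [h2]
    congr 2
    have h1 : 2 * j - 1 - 1 = 2 * (j - 1) := by omega
    rw [h1]; ring
  have hdrop : (yseg n m j y).drop (2 ^ k) = yseg n (m + 1) (2 * j) y := by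
    unfold yseg
    rw [hk, pow_succ, List.drop_take, List.drop_drop]
    have hA : 2 ^ k * 2 - 2 ^ k = 2 ^ k := by omega
    have hB : (j - 1) * (2 ^ k * 2) + 2 ^ k = (2 * j - 1) * 2 ^ k := by
      have h1 : 2 * j - 1 = 2 * (j - 1) + 1 := by omega
      rw [h1]; ring
    rw [hA, hB]
  have hlen : (hmap j m u).length = (i - 1) / 2 ^ m := by
    rw [hmap_length, hu]
  have hgd : (i + 2 ^ m - 1) / 2 ^ m - 2 = (hmap j m u).length - 1 := by
    rw [hlen, hq]; omega
  rw [hk, LR, htake, hdrop, hidx, ← hmap_odd j m hj1, ← hmap_even j m hj1, hgd]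
end

section
/- (Lemma 1, dependence form.) Let n ≥ 1, N = 2^n, 1 ≤ k ≤ n, 1 ≤ i ≤ N, and let u ∈ (ZMod 2)^{i−1}. If y, y' ∈ ℝ^N satisfy L_{N/2^k}^{(⌈i/2^k⌉)}(y_seg_{j,k}, h_{j,k}(u)) = L_{N/2^k}^{(⌈i/2^k⌉)}(y'_seg_{j,k}, h_{j,k}(u)) for every 1 ≤ j ≤ 2^k, then L_N^{(i)}(y, u) = L_N^{(i)}(y', u). That is, the calculation of the i-th likelihood ratio at length N depends on the channel output y only through the 2^k likelihood ratios L_{N/2^k}^{(⌈i/2^k⌉)}(y_seg_{j,k}, h_{j,k}(u)), 1 ≤ j ≤ 2^k, at length N/2^k. -/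
-- auxiliary lemmas
lemma LR_take (n : ℕ) (y : List ℝ) (i : ℕ) (u : List (ZMod 2)) :
    LR n (y.take (2 ^ n)) i u = LR n y i u := by
  induction n generalizing y i u with
  | zero => cases y <;> simp [LR]
  | succ n ih =>
      simp only [LR]
      rw [List.take_take, min_eq_left (Nat.pow_le_pow_right (by norm_num) (Nat.le_succ n)),
        List.drop_take, show 2 ^ (n+1) - 2 ^ n = 2 ^ n by rw [pow_succ]; omega, ih (y.drop (2^n))]

lemma hmap_zero (j : ℕ) (u : List (ZMod 2)) : hmap j 0 u = u := rfl

lemma hmap_succ (j k : ℕ) (u : List (ZMod 2)) :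
    hmap j (k+1) u = hmap j k (if (j-1).testBit k then qmap u else pmap u) := by
  unfold hmap
  rw [List.range_succ_eq_map, List.foldl_cons, List.foldl_map]
  have h1 : k + 1 - 1 - 0 = k := by omega
  have h2 : ∀ a : ℕ, k + 1 - 1 - (a + 1) = k - 1 - a := by omega
  simp only [h1, h2]

lemma hmap_congr (j j' k : ℕ) (u : List (ZMod 2))
    (h : ∀ t, t < k → (j-1).testBit t = (j'-1).testBit t) : hmap j k u = hmap j' k u := by
  unfold hmap
  apply List.foldl_ext
  intro v a ha
  rcases Nat.eq_zero_or_pos k with hk | hk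
  · simp [hk] at ha
  · rw [h (k-1-a) (by omega)]

lemma idx_lemma (i P : ℕ) (hi : 1 ≤ i) (hP : 1 ≤ P) :
    (i + 2 * P - 1) / (2 * P) = ((i + 1) / 2 + P - 1) / P := by
  have h1 : i + 2 * P - 1 = (i - 1) + 2 * P := by omega
  have h2 : (i + 1) / 2 + P - 1 = ((i + 1) / 2 - 1) + P := by omega
  rw [h1, h2, Nat.add_div_right _ (by omega), Nat.add_div_right _ (by omega),
    ← Nat.div_div_eq_div_mul]
  congr 2
  omega


lemma main_lemma (k : ℕ) : ∀ n i : ℕ, k ≤ n → 1 ≤ i → i ≤ 2 ^ n →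
    ∀ u : List (ZMod 2), u.length = i - 1 → ∀ y y' : List ℝ,
    2 ^ n ≤ y.length → 2 ^ n ≤ y'.length →
    (∀ j, 1 ≤ j → j ≤ 2 ^ k →
      LR (n - k) (yseg n k j y) ((i + 2 ^ k - 1) / 2 ^ k) (hmap j k u) =
      LR (n - k) (yseg n k j y') ((i + 2 ^ k - 1) / 2 ^ k) (hmap j k u)) →
    LR n y i u = LR n y' i u := by
  induction k with
  | zero =>
      intro n i _ hi1 hi2 u hu y y' hy hy' h
      have h1 := h 1 le_rfl le_rfl
      simp only [pow_zero, Nat.sub_zero, Nat.add_sub_cancel, Nat.div_one, hmap_zero,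
        yseg, Nat.sub_self, Nat.zero_mul, Nat.mul_one, List.drop_zero] at h1
      rwa [LR_take, LR_take] at h1
  | succ k ih =>
      intro n i hkn hi1 hi2 u hu y y' hy hy' h
      obtain ⟨m, rfl⟩ : ∃ m, n = m + 1 := ⟨n - 1, by omega⟩
      have hkm : k ≤ m := by omega
      have hpow : 2 ^ (m + 1) = 2 * 2 ^ m := by ring
      have hpowk : 2 ^ (k + 1) = 2 * 2 ^ k := by ring
      have hmk : 2 ^ k * 2 ^ (m - k) = 2 ^ m := by
        rw [← pow_add]; congr 1; omega
      have hsub : m + 1 - (k + 1) = m - k := by omega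
      have hidx : (i + 2 ^ (k + 1) - 1) / 2 ^ (k + 1) =
          ((i + 1) / 2 + 2 ^ k - 1) / 2 ^ k := by
        rw [hpowk]; exact idx_lemma i (2 ^ k) hi1 (Nat.one_le_two_pow)
      -- first half
      have hA : LR m (y.take (2 ^ m)) ((i + 1) / 2) (pmap u) =
          LR m (y'.take (2 ^ m)) ((i + 1) / 2) (pmap u) := by
        apply ih m ((i + 1) / 2) hkm (by omega) (by omega)
        · simp only [pmap, List.length_ofFn]; omega
        · simp [List.length_take]; omega
        · simp [List.length_take]; omega
        · intro j hj1 hj2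
          have hseg : ∀ z : List ℝ, yseg m k j (z.take (2 ^ m)) = yseg (m + 1) (k + 1) j z := by
            intro z
            unfold yseg
            rw [hsub, List.drop_take, List.take_take]
            congr 1
            have : j * 2 ^ (m - k) ≤ 2 ^ m := by
              calc j * 2 ^ (m - k) ≤ 2 ^ k * 2 ^ (m - k) :=
                    Nat.mul_le_mul_right _ hj2
                _ = 2 ^ m := hmk
            have hj3 : (j - 1) * 2 ^ (m - k) + 2 ^ (m - k) ≤ 2 ^ m := by
              obtain ⟨j', rfl⟩ : ∃ j', j = j' + 1 := ⟨j - 1, by omega⟩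
              have : (j' + 1 - 1) * 2 ^ (m - k) + 2 ^ (m - k) = (j' + 1) * 2 ^ (m - k) := by
                simp [Nat.add_mul]
              omega
            omega
          have hh : hmap j (k + 1) u = hmap j k (pmap u) := by
            rw [hmap_succ, Nat.testBit_lt_two_pow (by omega)]
            simp
          have := h j hj1 (by omega)
          rw [hsub, hh, hidx] at this
          rw [hseg, hseg]
          exact this
      -- second half
      have hB : LR m (y.drop (2 ^ m)) ((i + 1) / 2) (qmap u) =
          LR m (y'.drop (2 ^ m)) ((i + 1) / 2) (qmap u) := by
        apply ih m ((i + 1) / 2) hkm (by omega) (by omega)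
        · simp only [qmap, List.length_ofFn]; omega
        · simp [List.length_drop]; omega
        · simp [List.length_drop]; omega
        · intro j hj1 hj2
          have hseg : ∀ z : List ℝ,
              yseg m k j (z.drop (2 ^ m)) = yseg (m + 1) (k + 1) (j + 2 ^ k) z := by
            intro z
            unfold yseg
            rw [hsub, List.drop_drop]
            congr 2
            have : (j + 2 ^ k - 1) * 2 ^ (m - k) =
                (j - 1) * 2 ^ (m - k) + 2 ^ k * 2 ^ (m - k) := by
              rw [← Nat.add_mul]; congr 1; omega
            rw [this, hmk]; omega
          have hbit : j + 2 ^ k - 1 = 2 ^ k + (j - 1) := by omega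
          have hh : hmap (j + 2 ^ k) (k + 1) u = hmap j k (qmap u) := by
            rw [hmap_succ, hbit, Nat.testBit_two_pow_add_eq,
              Nat.testBit_lt_two_pow (by omega)]
            simp only [Bool.not_false, if_true]
            apply hmap_congr
            intro t ht
            rw [hbit, Nat.testBit_two_pow_add_gt ht]
          have := h (j + 2 ^ k) (by omega) (by rw [hpowk]; omega)
          rw [hsub, hh, hidx] at this
          rw [hseg, hseg]
          exact this
      simp only [LR]
      rw [hA, hB]


/-- Lemma 1, dependence form. `L_N^{(i)}(y, u)` depends on the channel
output `y` only through the `2^k` likelihood ratios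
`L_{N/2^k}^{(⌈i/2^k⌉)}(y_seg_{j,k}, h_{j,k}(u))`, `1 ≤ j ≤ 2^k`. -/
theorem stmt5 (n k i : ℕ) (hn : 1 ≤ n) (hk1 : 1 ≤ k) (hk2 : k ≤ n)
    (hi1 : 1 ≤ i) (hi2 : i ≤ 2 ^ n)
    (u : List (ZMod 2)) (hu : u.length = i - 1)
    (y y' : List ℝ) (hy : y.length = 2 ^ n) (hy' : y'.length = 2 ^ n)
    (h : ∀ j, 1 ≤ j → j ≤ 2 ^ k →
      LR (n - k) (yseg n k j y) ((i + 2 ^ k - 1) / 2 ^ k) (hmap j k u) =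
      LR (n - k) (yseg n k j y') ((i + 2 ^ k - 1) / 2 ^ k) (hmap j k u)) :
    LR n y i u = LR n y' i u :=
  main_lemma k n i hk2 hi1 hi2 u hu y y' hy.ge hy'.ge h
end

section
/- (Theorem 1, sharing part.) Let n ≥ 1, N = 2^n, let 2 ≤ i ≤ N, let z_i = ν₂(i−1) be the sharing factor of i, and let k be an integer with z_i < k ≤ n. Let u be a vector over ZMod 2 of length at least i−1 (the decoded bits), and let y ∈ ℝ^N. Then ⌈i/2^k⌉ = ⌈(i−1)/2^k⌉, and for every 1 ≤ j ≤ 2^k, h_{j,k}(u_1^{i−1}) = h_{j,k}(u_1^{i−2}); consequently, for every 1 ≤ j ≤ 2^k, L_{N/2^k}^{(⌈i/2^k⌉)}(y_seg_{j,k}, h_{j,k}(u_1^{i−1})) = L_{N/2^k}^{(⌈(i−1)/2^k⌉)}(y_seg_{j,k}, h_{j,k}(u_1^{i−2})). That is, when estimating bit i, all likelihood ratios at lengths N/2^k with k > z_i coincide with those already needed when estimating bit i−1, so only the likelihood ratios at lengths N, N/2, …, N/2^{z_i} need to be calculated. -/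
lemma pmap_take (v : List (ZMod 2)) (s : ℕ) : pmap (v.take s) = (pmap v).take (s / 2) := by
  apply List.ext_getElem
  · simp only [pmap, List.length_ofFn, List.length_take]; omega
  · intro t ht _
    simp only [pmap, List.length_ofFn, List.length_take] at ht
    simp [pmap, List.getD_eq_getElem?_getD, List.getElem?_take, show 2 * t < s by omega,
      show 2 * t + 1 < s by omega]

lemma qmap_take (v : List (ZMod 2)) (s : ℕ) : qmap (v.take s) = (qmap v).take (s / 2) := by
  apply List.ext_getElem
  · simp only [qmap, List.length_ofFn, List.length_take]; omega
  · intro t ht _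
    simp only [qmap, List.length_ofFn, List.length_take] at ht
    simp [qmap, List.getD_eq_getElem?_getD, List.getElem?_take, show 2 * t + 1 < s by omega]

lemma foldl_pmap_qmap_take {α : Type*} (c : α → Bool) (L : List α) (v : List (ZMod 2))
    (s : ℕ) :
    L.foldl (fun w a => if c a then qmap w else pmap w) (v.take s)
      = (L.foldl (fun w a => if c a then qmap w else pmap w) v).take (s / 2 ^ L.length) := by
  induction L generalizing v s with
  | nil => simp
  | cons a L ih =>
    have hstep : (if c a then qmap (v.take s) else pmap (v.take s))
        = (if c a then qmap v else pmap v).take (s / 2) := by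
      split
      · exact qmap_take v s
      · exact pmap_take v s
    rw [List.foldl_cons, List.foldl_cons, hstep, ih, Nat.div_div_eq_div_mul, List.length_cons,
      pow_succ']

lemma hmap_take (j k : ℕ) (v : List (ZMod 2)) (s : ℕ) :
    hmap j k (v.take s) = (hmap j k v).take (s / 2 ^ k) := by
  simpa [hmap] using foldl_pmap_qmap_take _ (List.range k) v s

lemma div_eq_sub_one_div_of_not_dvd {d m : ℕ} (hm : m ≠ 0) (hdvd : ¬ d ∣ m) :
    m / d = (m - 1) / d := by
  obtain ⟨m, rfl⟩ := Nat.exists_eq_succ_of_ne_zero hm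
  exact Nat.succ_div_of_not_dvd hdvd

theorem stmt10_general (n i k : ℕ) (hi1 : 2 ≤ i)
    (hzk : padicValNat 2 (i - 1) < k)
    (u : List (ZMod 2))
    (y : List ℝ) :
    (i + 2 ^ k - 1) / 2 ^ k = (i - 1 + 2 ^ k - 1) / 2 ^ k ∧
    (∀ j, 1 ≤ j → j ≤ 2 ^ k →
      hmap j k (u.take (i - 1)) = hmap j k (u.take (i - 2))) ∧
    (∀ j, 1 ≤ j → j ≤ 2 ^ k →
      LR (n - k) (yseg n k j y) ((i + 2 ^ k - 1) / 2 ^ k) (hmap j k (u.take (i - 1))) =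
      LR (n - k) (yseg n k j y) ((i - 1 + 2 ^ k - 1) / 2 ^ k)
        (hmap j k (u.take (i - 2)))) := by
  have hm : i - 1 ≠ 0 := by omega
  have hdvd : ¬ 2 ^ k ∣ i - 1 := by
    rw [Nat.pow_dvd_iff_le_padicValNat (by norm_num) hm]
    omega
  have hdiv := div_eq_sub_one_div_of_not_dvd hm hdvd
  have hceil : (i + 2 ^ k - 1) / 2 ^ k = (i - 1 + 2 ^ k - 1) / 2 ^ k := by
    have hpos : 0 < 2 ^ k := by positivity
    rw [show i + 2 ^ k - 1 = i - 1 + 2 ^ k by omega,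
      show i - 1 + 2 ^ k - 1 = i - 1 - 1 + 2 ^ k by omega,
      Nat.add_div_right _ hpos, Nat.add_div_right _ hpos, hdiv]
  have hdecoded (j : ℕ) : hmap j k (u.take (i - 1)) = hmap j k (u.take (i - 2)) := by
    rw [hmap_take, hmap_take, hdiv, show i - 1 - 1 = i - 2 by omega]
  exact ⟨hceil, fun j _ _ => hdecoded j, fun j _ _ => by rw [hceil, hdecoded]⟩

/-- Theorem 1, sharing part. For `2 ≤ i ≤ N = 2^n`, sharing factor
`z_i = ν₂(i−1)` and `z_i < k ≤ n`: `⌈i/2^k⌉ = ⌈(i−1)/2^k⌉`,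
`h_{j,k}(u_1^{i−1}) = h_{j,k}(u_1^{i−2})`, and hence the likelihood ratios at length
`N/2^k` needed for bit `i` coincide with those needed for bit `i−1`. -/
theorem stmt10 (n i k : ℕ) (hn : 1 ≤ n) (hi1 : 2 ≤ i) (hi2 : i ≤ 2 ^ n)
    (hzk : padicValNat 2 (i - 1) < k) (hk : k ≤ n)
    (u : List (ZMod 2)) (hu : i - 1 ≤ u.length)
    (y : List ℝ) (hy : y.length = 2 ^ n) :
    (i + 2 ^ k - 1) / 2 ^ k = (i - 1 + 2 ^ k - 1) / 2 ^ k ∧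
    (∀ j, 1 ≤ j → j ≤ 2 ^ k →
      hmap j k (u.take (i - 1)) = hmap j k (u.take (i - 2))) ∧
    (∀ j, 1 ≤ j → j ≤ 2 ^ k →
      LR (n - k) (yseg n k j y) ((i + 2 ^ k - 1) / 2 ^ k) (hmap j k (u.take (i - 1))) =
      LR (n - k) (yseg n k j y) ((i - 1 + 2 ^ k - 1) / 2 ^ k)
        (hmap j k (u.take (i - 2)))) :=
  stmt10_general n i k hi1 hzk u y
end
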